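/- Let p be a probability mass function on a finite alphabet 𝒳 with Shannon entropy H(X), let X₁,…,Xₙ be i.i.d. with pmf p, and let ε > 0. Then ℙ[ | −(1/n) log₂ p(Xⁿ) − H(X) | > ε ] ≤ e^{n C_X^{(1)}(ε)} + e^{n C_X^{(2)}(ε)}. -/

import Mathlib

/-!
Each tail of `-(1/n) log₂ p(Xⁿ)` is bounded by the exponential Markov (Chernoff) inequality: on
the tail `p(xⁿ)^{±s/ln 2}` is at most `e^{-ns(±H+ε)}`, so the tail probability is at most
`e^{-ns(±H+ε)} 𝔼[p(Xⁿ)^{∓s/ln 2}]`, and the expectation factorizes over the i.i.d. coordinates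
as `(𝔼[p(X)^{∓s/ln 2}])ⁿ`. Optimizing over `s > 0` gives the two exponents.
-/

open Finset Real
open scoped Classical BigOperators

/-- Shannon entropy (in bits) of a pmf on a finite alphabet, with the convention `0 log 0 = 0`. -/
noncomputable def shannonEntropy {W : Type*} [Fintype W] (q : W → ℝ) : ℝ :=
  - ∑ w, q w * Real.logb 2 (q w)

/-- Probability of an i.i.d. sequence: `p(xⁿ) = ∏ᵢ p(xᵢ)`. -/
noncomputable def seqProb {W : Type*} (q : W → ℝ) {n : ℕ} (w : Fin n → W) : ℝ :=
  ∏ i, q (w i)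

/-- Chernoff exponent `C_X^{(1)}(ε) = inf_{s>0} ( ln 𝔼[p(X)^{−s/ln 2}] − s(H(X)+ε) )`. -/
noncomputable def chernoff1 {W : Type*} [Fintype W] (q : W → ℝ) (ε : ℝ) : ℝ :=
  sInf ((fun s : ℝ =>
    Real.log (∑ w ∈ Finset.univ.filter (fun w => 0 < q w), q w ^ (1 - s / Real.log 2))
      - s * (shannonEntropy q + ε)) '' Set.Ioi 0)

/-- Chernoff exponent `C_X^{(2)}(ε) = inf_{s>0} ( ln 𝔼[p(X)^{s/ln 2}] − s(−H(X)+ε) )`. -/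
noncomputable def chernoff2 {W : Type*} [Fintype W] (q : W → ℝ) (ε : ℝ) : ℝ :=
  sInf ((fun s : ℝ =>
    Real.log (∑ w ∈ Finset.univ.filter (fun w => 0 < q w), q w ^ (1 + s / Real.log 2))
      - s * (-shannonEntropy q + ε)) '' Set.Ioi 0)

lemma le_exp_mul_sInf_image {a : ℝ} {n : ℕ} {f : ℝ → ℝ} {S : Set ℝ} (hS : S.Nonempty)
    (h : ∀ s ∈ S, a ≤ exp (n * f s)) : a ≤ exp (n * sInf (f '' S)) := by
  obtain ⟨s₀, hs₀⟩ := hS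
  rcases Nat.eq_zero_or_pos n with rfl | hn
  · simpa using h s₀ hs₀
  rcases le_or_gt a 0 with ha | ha
  · exact ha.trans (exp_pos _).le
  have hn' : (0 : ℝ) < n := Nat.cast_pos.mpr hn
  have hlog : log a / n ≤ sInf (f '' S) := by
    refine le_csInf ⟨f s₀, s₀, hs₀, rfl⟩ ?_
    rintro _ ⟨s, hs, rfl⟩
    rw [div_le_iff₀' hn', ← log_exp (n * f s)]
    exact log_le_log ha (h s hs)
  calc a = exp (log a) := (exp_log ha).symm
    _ ≤ exp (n * sInf (f '' S)) := exp_le_exp.mpr ((div_le_iff₀' hn').mp hlog)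

-- `hL` covers `n = 0`, where `1 / n = 0` in Lean.
lemma mul_le_of_lt_inv_mul {n : ℕ} {c L : ℝ} (hL : n = 0 → L = 0) (h : c < 1 / n * L) :
    n * c ≤ L := by
  rcases Nat.eq_zero_or_pos n with rfl | hn
  · simp [hL rfl]
  have hn' : (0 : ℝ) < n := Nat.cast_pos.mpr hn
  rw [one_div, inv_mul_eq_div, lt_div_iff₀' hn'] at h
  exact h.le

section seqProb

variable {X : Type*} {p : X → ℝ} {n : ℕ}

lemma logb_seqProb_fin_zero (xn : Fin 0 → X) : logb 2 (seqProb p xn) = 0 := by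
  simp [seqProb]

lemma seqProb_nonneg (hp : ∀ x, 0 ≤ p x) (xn : Fin n → X) : 0 ≤ seqProb p xn :=
  prod_nonneg fun i _ => hp (xn i)

lemma seqProb_rpow (hp : ∀ x, 0 ≤ p x) (xn : Fin n → X) (t : ℝ) :
    seqProb p xn ^ t = seqProb (fun x => p x ^ t) xn :=
  (Real.finsetProd_rpow _ _ (fun i _ => hp (xn i)) t).symm

lemma sum_piFinset_seqProb (A : Finset X) (q : X → ℝ) :
    ∑ xn ∈ Fintype.piFinset (fun _ : Fin n => A), seqProb q xn = (∑ x ∈ A, q x) ^ n := by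
  rw [sum_pow']
  rfl

lemma mem_piFinset_of_seqProb_ne_zero [Fintype X] (hp : ∀ x, 0 ≤ p x) {xn : Fin n → X}
    (h : seqProb p xn ≠ 0) : xn ∈ Fintype.piFinset fun _ => univ.filter (fun x => 0 < p x) := by
  rw [Fintype.mem_piFinset]
  intro i
  rw [mem_filter]
  refine ⟨mem_univ _, (hp _).lt_of_ne fun hi => h (prod_eq_zero (mem_univ i) hi.symm)⟩

lemma sum_seqProb_le_of_rpow_neg_le [Fintype X] (hp : ∀ x, 0 ≤ p x) (E : Finset (Fin n → X))
    {r M : ℝ} (hM : 0 ≤ M) (hE : ∀ xn ∈ E, 0 < seqProb p xn → seqProb p xn ^ (-r) ≤ M) :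
    ∑ xn ∈ E, seqProb p xn ≤ M * (∑ x ∈ univ.filter (fun x => 0 < p x), p x ^ (1 + r)) ^ n := by
  rw [← sum_filter_ne_zero, ← sum_piFinset_seqProb, mul_sum]
  calc ∑ xn ∈ E.filter (fun xn => seqProb p xn ≠ 0), seqProb p xn
      ≤ ∑ xn ∈ E.filter (fun xn => seqProb p xn ≠ 0), M * seqProb (fun x => p x ^ (1 + r)) xn := by
        refine sum_le_sum fun xn hxn => ?_
        rw [mem_filter] at hxn
        have hpos := (seqProb_nonneg hp xn).lt_of_ne' hxn.2
        calc seqProb p xn = seqProb p xn ^ (-r) * seqProb p xn ^ (1 + r) := by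
              rw [← rpow_add hpos, add_comm 1 r, neg_add_cancel_left, rpow_one]
          _ ≤ M * seqProb (fun x => p x ^ (1 + r)) xn := by
              rw [seqProb_rpow hp xn (1 + r)]
              exact mul_le_mul_of_nonneg_right (hE xn hxn.1 hpos)
                (seqProb_nonneg (fun x => rpow_nonneg (hp x) _) xn)
    _ ≤ _ := by
        refine sum_le_sum_of_subset_of_nonneg (fun xn hxn => ?_) fun xn _ _ => ?_
        · exact mem_piFinset_of_seqProb_ne_zero hp (mem_filter.mp hxn).2
        · exact mul_nonneg hM (seqProb_nonneg (fun x => rpow_nonneg (hp x) _) xn)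

lemma sum_seqProb_le_exp_of_logb_le [Fintype X] (hp : ∀ x, 0 ≤ p x) (E : Finset (Fin n → X))
    {t c : ℝ}
    (hE : ∀ xn ∈ E, 0 < seqProb p xn → -(t * logb 2 (seqProb p xn)) ≤ n * c) :
    ∑ xn ∈ E, seqProb p xn ≤
      exp (n * (log (∑ x ∈ univ.filter (fun x => 0 < p x), p x ^ (1 + t / log 2)) + c)) := by
  set S := ∑ x ∈ univ.filter (fun x => 0 < p x), p x ^ (1 + t / log 2)
  have hS : 0 ≤ S := sum_nonneg fun x _ => rpow_nonneg (hp x) _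
  calc ∑ xn ∈ E, seqProb p xn ≤ exp (n * c) * S ^ n := by
        refine sum_seqProb_le_of_rpow_neg_le hp E (exp_pos _).le fun xn hxn hpos => ?_
        rw [rpow_def_of_pos hpos, exp_le_exp]
        calc log (seqProb p xn) * -(t / log 2) = -(t * logb 2 (seqProb p xn)) := by
              rw [logb]; ring
          _ ≤ n * c := hE xn hxn hpos
    _ ≤ exp (n * c) * exp (log S) ^ n :=
        mul_le_mul_of_nonneg_left (pow_le_pow_left₀ hS (le_exp_log S) n) (exp_pos _).le
    _ = exp (n * (log S + c)) := by
        rw [← exp_nat_mul, ← exp_add]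
        ring_nf

lemma sum_seqProb_upperTail_le [Fintype X] (hp : ∀ x, 0 ≤ p x) (ε : ℝ) :
    ∑ xn ∈ univ.filter (fun xn : Fin n → X =>
        ε < -(1 / (n : ℝ)) * logb 2 (seqProb p xn) - shannonEntropy p), seqProb p xn
    ≤ exp (n * chernoff1 p ε) := by
  refine le_exp_mul_sInf_image Set.nonempty_Ioi fun s (hs : 0 < s) => ?_
  have hexp : 1 - s / log 2 = 1 + -s / log 2 := by ring
  rw [hexp, sub_eq_add_neg]
  refine sum_seqProb_le_exp_of_logb_le hp _ fun xn hxn _ => ?_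
  have hL := mul_le_of_lt_inv_mul (n := n) (c := shannonEntropy p + ε)
    (L := -logb 2 (seqProb p xn)) (fun hn => by subst hn; rw [logb_seqProb_fin_zero, neg_zero])
    (by linarith [(mem_filter.mp hxn).2])
  linarith [mul_le_mul_of_nonneg_left hL hs.le]

lemma sum_seqProb_lowerTail_le [Fintype X] (hp : ∀ x, 0 ≤ p x) (ε : ℝ) :
    ∑ xn ∈ univ.filter (fun xn : Fin n → X =>
        -(1 / (n : ℝ)) * logb 2 (seqProb p xn) - shannonEntropy p < -ε), seqProb p xn
    ≤ exp (n * chernoff2 p ε) := by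
  refine le_exp_mul_sInf_image Set.nonempty_Ioi fun s (hs : 0 < s) => ?_
  rw [sub_eq_add_neg]
  refine sum_seqProb_le_exp_of_logb_le hp _ fun xn hxn _ => ?_
  have hL := mul_le_of_lt_inv_mul (n := n) (c := -shannonEntropy p + ε)
    (L := logb 2 (seqProb p xn)) (fun hn => by subst hn; rw [logb_seqProb_fin_zero])
    (by linarith [(mem_filter.mp hxn).2])
  linarith [mul_le_mul_of_nonneg_left hL hs.le]

end seqProb

theorem atypicality_probability_bound_general
    {X : Type*} [Fintype X] (p : X → ℝ)
    (hp : ∀ x, 0 ≤ p x)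
    (n : ℕ) (ε : ℝ) :
    ∑ xn ∈ Finset.univ.filter (fun xn : Fin n → X =>
        |(-(1 / (n : ℝ))) * Real.logb 2 (seqProb p xn) - shannonEntropy p| > ε),
      seqProb p xn
    ≤ Real.exp ((n : ℝ) * chernoff1 p ε) + Real.exp ((n : ℝ) * chernoff2 p ε) := by
  set v := fun xn : Fin n → X => -(1 / (n : ℝ)) * logb 2 (seqProb p xn) - shannonEntropy p
  have hsplit : univ.filter (fun xn => |v xn| > ε)
      = univ.filter (fun xn => ε < v xn) ∪ univ.filter (fun xn => v xn < -ε) := by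
    rw [← filter_or]
    exact filter_congr fun xn _ => by rw [gt_iff_lt, lt_abs, lt_neg]
  calc ∑ xn ∈ univ.filter (fun xn => |v xn| > ε), seqProb p xn
      ≤ ∑ xn ∈ univ.filter (fun xn => ε < v xn), seqProb p xn
        + ∑ xn ∈ univ.filter (fun xn => v xn < -ε), seqProb p xn := by
        rw [hsplit, ← sum_union_inter]
        exact le_add_of_nonneg_right (sum_nonneg fun xn _ => seqProb_nonneg hp xn)
    _ ≤ _ := add_le_add (sum_seqProb_upperTail_le hp ε) (sum_seqProb_lowerTail_le hp ε)

/-- For i.i.d. `X₁,…,Xₙ` with pmf `p` and `ε > 0`,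
`ℙ[ | −(1/n) log₂ p(Xⁿ) − H(X) | > ε ] ≤ e^{n C_X^{(1)}(ε)} + e^{n C_X^{(2)}(ε)}`. -/
theorem atypicality_probability_bound
    {X : Type*} [Fintype X] (p : X → ℝ)
    (hp : ∀ x, 0 ≤ p x) (hsum : ∑ x, p x = 1)
    (n : ℕ) (ε : ℝ) (hε : 0 < ε) :
    ∑ xn ∈ Finset.univ.filter (fun xn : Fin n → X =>
        |(-(1 / (n : ℝ))) * Real.logb 2 (seqProb p xn) - shannonEntropy p| > ε),
      seqProb p xn
    ≤ Real.exp ((n : ℝ) * chernoff1 p ε) + Real.exp ((n : ℝ) * chernoff2 p ε) :=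
  atypicality_probability_bound_general p hp n ε
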